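/- arXiv:2509.16470 — 5 statements merged into one kernel-verified Lean document; each statement's English description precedes it below -/
import Mathlib

section
/- Let α ∈ (0, π), β ∈ (0, π/2) with β < α, ψ ∈ (0, π/2), and let h, s1, s2, ℓ, ℓ' be positive real numbers satisfying: tanh s1 · cos β = tanh h; tanh s2 · cos(α − β) = tanh h; cosh s1 = cot β · cot ψ; and cosh ℓ' = cot ψ · (1 + cos α)/sin α. Then cosh ℓ < cosh ℓ' if and only if cosh s1 · (tanh s1 / tanh s2 − cos α) > (1 − cos α) · cosh ℓ. -/
open Real

theorem isosceles_triangle_comparison_criterion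
    (α β ψ h s1 s2 ℓ ℓ' : ℝ)
    (hα : α ∈ Set.Ioo 0 π) (hβ : β ∈ Set.Ioo 0 (π / 2)) (hβα : β < α)
    (hψ : ψ ∈ Set.Ioo 0 (π / 2))
    (hh : 0 < h) (hs1 : 0 < s1) (hs2 : 0 < s2) (hℓ : 0 < ℓ) (hℓ' : 0 < ℓ')
    (e1 : Real.tanh s1 * Real.cos β = Real.tanh h)
    (e2 : Real.tanh s2 * Real.cos (α - β) = Real.tanh h)
    (e3 : Real.cosh s1 = Real.cot β * Real.cot ψ)
    (e4 : Real.cosh ℓ' = Real.cot ψ * (1 + Real.cos α) / Real.sin α) :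
    Real.cosh ℓ < Real.cosh ℓ' ↔
      Real.cosh s1 * (Real.tanh s1 / Real.tanh s2 - Real.cos α) >
        (1 - Real.cos α) * Real.cosh ℓ := by
  obtain ⟨hα0, hαπ⟩ := hα
  obtain ⟨hβ0, hβπ⟩ := hβ
  obtain ⟨hψ0, hψπ⟩ := hψ
  have hsinα : 0 < Real.sin α := Real.sin_pos_of_pos_of_lt_pi hα0 hαπ
  have hcosα : Real.cos α < 1 := by
    nlinarith [Real.sin_sq_add_cos_sq α, hsinα]
  have hcosβ : 0 < Real.cos β := Real.cos_pos_of_mem_Ioo ⟨by linarith [Real.pi_pos], hβπ⟩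
  have hsinβ : 0 < Real.sin β := Real.sin_pos_of_pos_of_lt_pi hβ0 (by linarith [Real.pi_pos])
  have hcosψ : 0 < Real.cos ψ := Real.cos_pos_of_mem_Ioo ⟨by linarith [Real.pi_pos], hψπ⟩
  have hsinψ : 0 < Real.sin ψ := Real.sin_pos_of_pos_of_lt_pi hψ0 (by linarith [Real.pi_pos])
  have htanhh : 0 < Real.tanh h := by
    rw [Real.tanh_eq_sinh_div_cosh]
    exact div_pos (Real.sinh_pos_iff.2 hh) (Real.cosh_pos h)
  have htanh1 : 0 < Real.tanh s1 := by
    rw [Real.tanh_eq_sinh_div_cosh]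
    exact div_pos (Real.sinh_pos_iff.2 hs1) (Real.cosh_pos s1)
  have htanh2 : 0 < Real.tanh s2 := by
    rw [Real.tanh_eq_sinh_div_cosh]
    exact div_pos (Real.sinh_pos_iff.2 hs2) (Real.cosh_pos s2)
  have hcosab : 0 < Real.cos (α - β) := by
    nlinarith [e2, htanhh, htanh2]
  have hratio : Real.tanh s1 / Real.tanh s2 = Real.cos (α - β) / Real.cos β := by
    rw [div_eq_div_iff (ne_of_gt htanh2) (ne_of_gt hcosβ)]
    nlinarith [e1, e2]
  have key : Real.cosh s1 * (Real.tanh s1 / Real.tanh s2 - Real.cos α)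
      = Real.sin α * (Real.cos ψ / Real.sin ψ) := by
    rw [hratio, e3, Real.cot_eq_cos_div_sin, Real.cot_eq_cos_div_sin, Real.cos_sub]
    field_simp
    ring
  rw [key, e4, Real.cot_eq_cos_div_sin]
  set c := Real.cos ψ / Real.sin ψ with hcdef
  have hcpos : 0 < c := div_pos hcosψ hsinψ
  
  rw [lt_div_iff₀ hsinα]
  have hsq : Real.sin α ^ 2 + Real.cos α ^ 2 = 1 := Real.sin_sq_add_cos_sq α
  have hchl : 0 < Real.cosh ℓ := Real.cosh_pos ℓ
  clear e1 e2 e3 e4 hratio key hcdef htanhh htanh1 htanh2 hcosab hβα hh hs1 hs2 hℓ hℓ' hα0 hαπ hβ0 hβπ hψ0 hψπ hcosβ hsinβ hcosψ hsinψ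
  have hcosα2 : (-1 : ℝ) < Real.cos α := by
    nlinarith [hsq, pow_pos hsinα 2, sq_nonneg (Real.cos α + 1)]
  constructor
  · intro hlt
    have h2 := mul_lt_mul_of_pos_left hlt (sub_pos.2 hcosα)
    have h3 : ((1 - Real.cos α) * Real.cosh ℓ) * Real.sin α
        < (Real.sin α * c) * Real.sin α := by nlinarith [h2, hsq]
    exact lt_of_mul_lt_mul_right h3 hsinα.le
  · intro hlt
    have h2 := mul_lt_mul_of_pos_left hlt (by linarith : (0:ℝ) < 1 + Real.cos α)
    have h3 : (Real.cosh ℓ * Real.sin α) * Real.sin α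
        < (c * (1 + Real.cos α)) * Real.sin α := by nlinarith [h2, hsq]
    exact lt_of_mul_lt_mul_right h3 hsinα.le
end

section
/- Let p, q, r be integers with 3 ≤ p < q and r ≥ 4, and set α := π − 2π/r. Then cos(π/p) + cos(π/q)·cos(π/r) − (cos(π/q) + cos(π/p)·cos(π/r))·cos α > (1 − cos α)·(cos(π/p) + cos(π/p)·cos(π/r)). -/
open Real

theorem angle_monotonicity_inequality
    (p q r : ℤ) (hp : 3 ≤ p) (hpq : p < q) (hr : 4 ≤ r) :
    Real.cos (π / (p : ℝ)) + Real.cos (π / (q : ℝ)) * Real.cos (π / (r : ℝ)) -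
        (Real.cos (π / (q : ℝ)) + Real.cos (π / (p : ℝ)) * Real.cos (π / (r : ℝ))) *
          Real.cos (π - 2 * π / (r : ℝ)) >
      (1 - Real.cos (π - 2 * π / (r : ℝ))) *
        (Real.cos (π / (p : ℝ)) + Real.cos (π / (p : ℝ)) * Real.cos (π / (r : ℝ))) := by
  have hπ := Real.pi_pos
  have hp0 : (0:ℝ) < (p:ℝ) := by exact_mod_cast lt_of_lt_of_le (by norm_num) hp
  have hq0 : (0:ℝ) < (q:ℝ) := lt_trans hp0 (by exact_mod_cast hpq)
  have hr0 : (0:ℝ) < (r:ℝ) := by exact_mod_cast lt_of_lt_of_le (by norm_num) hr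
  -- cos(π/q) > cos(π/p)
  have hlt : π / (q:ℝ) < π / (p:ℝ) :=
    div_lt_div_of_pos_left hπ hp0 (by exact_mod_cast hpq)
  have h1 : Real.cos (π / (p:ℝ)) < Real.cos (π / (q:ℝ)) := by
    apply Real.cos_lt_cos_of_nonneg_of_le_pi (le_of_lt (div_pos hπ hq0)) ?_ hlt
    calc π / (p:ℝ) ≤ π / 1 := by
          apply div_le_div_of_nonneg_left hπ.le one_pos
          exact_mod_cast le_trans (by norm_num) hp
      _ = π := div_one π
  -- cos(π/r) > 0
  have h2 : 0 < Real.cos (π / (r:ℝ)) := by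
    apply Real.cos_pos_of_mem_Ioo
    constructor
    · linarith [div_pos hπ hr0]
    · have : π / (r:ℝ) ≤ π / 4 := by
        apply div_le_div_of_nonneg_left hπ.le (by norm_num)
        exact_mod_cast hr
      linarith
  -- cos(π − 2π/r) ≤ 0
  have h3 : Real.cos (π - 2 * π / (r:ℝ)) ≤ 0 := by
    rw [Real.cos_pi_sub]
    have h4 : (0:ℝ) < 2 * π / (r:ℝ) := div_pos (by linarith) hr0
    have h5 : 2 * π / (r:ℝ) ≤ π / 2 := by
      rw [div_le_div_iff₀ hr0 (by norm_num)]
      nlinarith [(show (4:ℝ) ≤ (r:ℝ) by exact_mod_cast hr)]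
    have := Real.cos_nonneg_of_mem_Icc ⟨by linarith, h5⟩
    linarith
  nlinarith [mul_pos (sub_pos.2 h1) (sub_pos.2 (lt_of_le_of_lt h3 h2))]
end

section
/- Let p, q, r be integers with 3 ≤ p < q and r ≥ 4, and set α := π − 2π/r. Let a, b, b' ≥ 0 be real numbers with cosh a = (cos(π/p) + cos(π/q)·cos(π/r))/(sin(π/q)·sin(π/r)), cosh b = (cos(π/q) + cos(π/p)·cos(π/r))/(sin(π/p)·sin(π/r)), and cosh b' = cos(π/p)·(1 + cos(π/r))/(sin(π/p)·sin(π/r)). Then cosh b · (tanh b / tanh a − cos α) > (1 − cos α) · cosh b'. -/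
set_option maxHeartbeats 1000000

open Real

lemma Q1_pos_aux (x y z : ℝ) (hx1 : 1/2 ≤ x) (hy1 : 1/2 ≤ y) (hy2 : y ≤ 1)
    (hz1 : 7/10 ≤ z) (hz2 : z ≤ 1) :
    0 < y - 6*y*z^2 + 9*y*z^4 - 4*y*z^6 - y^3 + 5*y^3*z^2 - 4*y^3*z^4
      + x - 2*x*z^2 - 4*x*z^3 - 3*x*z^4 + 4*x*z^5 + 4*x*z^6
      - x*y^2 - 2*x*y^2*z + x*y^2*z^2 + 14*x*y^2*z^3 + 4*x*y^2*z^4 - 8*x*y^2*z^5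
      - x^2*y - 2*x^2*y*z + 5*x^2*y*z^2 + 2*x^2*y*z^3 + 4*x^2*y*z^4 + 8*x^2*y*z^5
      - x^3 + x^3*z^2 + 4*x^3*z^3 + 4*x^3*z^4 := by
  have hz0 : (0:ℝ) ≤ z := by linarith
  have hzsq : 49/100 ≤ z^2 := by nlinarith
  have hzsq1 : z^2 ≤ 1 := by nlinarith
  have hA' : 0 ≤ -4*z^4+7*z^2+4*z+1 := by nlinarith [sq_nonneg z, sq_nonneg (z^2)]
  set M : ℝ := x^2*(z+1)*(2*z^2+z+1) + x*y*(4*z^4+4*z^3+3*z^2+4*z+1)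
      + y^2*(-4*z^4+7*z^2+4*z+1) - (1-z)*(2*z^4+5*z^3+5*z^2+3*z+1) with hMdef
  have e1 : 0 ≤ (x-1/2)*((x+1/2)*(z+1)*(2*z^2+z+1) + y*(4*z^4+4*z^3+3*z^2+4*z+1)) := by
    refine mul_nonneg (by linarith) (add_nonneg ?_ ?_)
    · refine mul_nonneg (mul_nonneg (by linarith) (by linarith)) (by nlinarith [sq_nonneg z])
    · refine mul_nonneg (by linarith) (by positivity)
  have e2 : 0 ≤ (y-1/2)*((1/2)*(4*z^4+4*z^3+3*z^2+4*z+1) + (y+1/2)*(-4*z^4+7*z^2+4*z+1)) := by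
    refine mul_nonneg (by linarith) (add_nonneg (by positivity) (mul_nonneg (by linarith) hA'))
  have e3 : 0 ≤ 2*z^5+3*z^4+(3/2)*z^3+(5/4)*z^2+(1/2)*z - 9/4 := by
    nlinarith [mul_nonneg (mul_nonneg (sub_nonneg.2 hz1) hz0) hz0,
      mul_nonneg (mul_nonneg (mul_nonneg (sub_nonneg.2 hz1) hz0) hz0) hz0,
      mul_nonneg (mul_nonneg (mul_nonneg (mul_nonneg (sub_nonneg.2 hz1) hz0) hz0) hz0) hz0,
      mul_nonneg (sub_nonneg.2 hz1) hz0, sub_nonneg.2 hz1]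
  have hM : 2 ≤ M := by nlinarith [e1, e2, e3]
  have hterm1 : -(1/10) ≤ (1-z^2)*(4*z^2-1)*(y*(y^2+z^2-1)) := by
    rcases le_or_gt 1 (y^2+z^2) with h|h
    · have : 0 ≤ (1-z^2)*(4*z^2-1)*(y*(y^2+z^2-1)) := by
        refine mul_nonneg (mul_nonneg (by linarith) (by linarith))
          (mul_nonneg (by linarith) (by linarith))
      linarith
    · have hz34 : z^2 < 3/4 := by nlinarith
      have hfac : 0 ≤ (1-z^2)*(4*z^2-1) := mul_nonneg (by linarith) (by linarith)
      have hstep : y*(1-y^2-z^2) ≤ (1/2)*(3/4-z^2) := by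
        nlinarith [mul_nonneg (sub_nonneg.2 hy1) (show (0:ℝ) ≤ y^2+y/2-3/4+z^2 by nlinarith)]
      have h4 : (1-z^2)*(4*z^2-1)*(y*(1-y^2-z^2)) ≤ (1-z^2)*(4*z^2-1)*((1/2)*(3/4-z^2)) :=
        mul_le_mul_of_nonneg_left hstep hfac
      have hzpoly : (1-z^2)*(4*z^2-1)*((1/2)*(3/4-z^2)) ≤ 1/10 := by
        nlinarith [sq_nonneg (z^2-49/100), sq_nonneg (z^2-3/4),
          mul_nonneg (sub_nonneg.2 hzsq) (sub_nonneg.2 hzsq),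
          mul_nonneg (mul_nonneg (sub_nonneg.2 hzsq) (sub_nonneg.2 hzsq)) (le_of_lt (sub_pos.2 hz34))]
      nlinarith [h4, hzpoly]
  have hxM : 1 ≤ x*M := by
    nlinarith [mul_nonneg (sub_nonneg.2 hx1) (show (0:ℝ) ≤ M - 2 by linarith)]
  have hzxM : 2/5 ≤ (2*z-1)*(x*M) := by
    nlinarith [mul_nonneg (show (0:ℝ) ≤ 2*z-1-2/5 by linarith) (show (0:ℝ) ≤ x*M-1 by linarith)]
  nlinarith [hterm1, hzxM]

theorem lemma_4_3_analytic_core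
    (p q r : ℤ) (hp : 3 ≤ p) (hpq : p < q) (hr : 4 ≤ r)
    (a b b' : ℝ) (ha : 0 ≤ a) (hb : 0 ≤ b) (hb' : 0 ≤ b')
    (hcosha : Real.cosh a =
      (Real.cos (π / (p : ℝ)) + Real.cos (π / (q : ℝ)) * Real.cos (π / (r : ℝ))) /
        (Real.sin (π / (q : ℝ)) * Real.sin (π / (r : ℝ))))
    (hcoshb : Real.cosh b =
      (Real.cos (π / (q : ℝ)) + Real.cos (π / (p : ℝ)) * Real.cos (π / (r : ℝ))) /
        (Real.sin (π / (p : ℝ)) * Real.sin (π / (r : ℝ))))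
    (hcoshb' : Real.cosh b' =
      Real.cos (π / (p : ℝ)) * (1 + Real.cos (π / (r : ℝ))) /
        (Real.sin (π / (p : ℝ)) * Real.sin (π / (r : ℝ)))) :
    Real.cosh b * (Real.tanh b / Real.tanh a - Real.cos (π - 2 * π / (r : ℝ))) >
      (1 - Real.cos (π - 2 * π / (r : ℝ))) * Real.cosh b' := by
  have hπ := Real.pi_pos
  have hp3 : (3:ℝ) ≤ (p:ℝ) := by exact_mod_cast hp
  have hq4 : (4:ℝ) ≤ (q:ℝ) := by exact_mod_cast (show (4:ℤ) ≤ q by omega)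
  have hr4 : (4:ℝ) ≤ (r:ℝ) := by exact_mod_cast hr
  have hpq' : (p:ℝ) < (q:ℝ) := by exact_mod_cast hpq
  have hap : 0 < π / (p:ℝ) := div_pos hπ (by linarith)
  have haq : 0 < π / (q:ℝ) := div_pos hπ (by linarith)
  have har : 0 < π / (r:ℝ) := div_pos hπ (by linarith)
  have hap3 : π / (p:ℝ) ≤ π / 3 := by
    rw [div_le_div_iff₀ (by linarith) (by norm_num)]; nlinarith
  have haq3 : π / (q:ℝ) < π / (p:ℝ) := by
    rw [div_lt_div_iff₀ (by linarith) (by linarith)]; nlinarith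
  have har4 : π / (r:ℝ) ≤ π / 4 := by
    rw [div_le_div_iff₀ (by linarith) (by norm_num)]; nlinarith
  have hap_pi : π / (p:ℝ) < π := by linarith
  have haq_pi : π / (q:ℝ) < π := by linarith
  have har_pi : π / (r:ℝ) < π := by linarith
  set x := Real.cos (π / (p:ℝ)) with hxdef
  set y := Real.cos (π / (q:ℝ)) with hydef
  set z := Real.cos (π / (r:ℝ)) with hzdef
  set sp := Real.sin (π / (p:ℝ)) with hspdef
  set sq := Real.sin (π / (q:ℝ)) with hsqdef
  set sr := Real.sin (π / (r:ℝ)) with hsrdef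
  have hx1 : 1/2 ≤ x := by
    have := Real.cos_le_cos_of_nonneg_of_le_pi hap.le (by linarith) hap3
    rwa [Real.cos_pi_div_three] at this
  have hx2 : x < 1 := by
    have := Real.cos_lt_cos_of_nonneg_of_le_pi (le_refl 0) hap_pi.le hap
    rwa [Real.cos_zero] at this
  have hxy : x < y := Real.cos_lt_cos_of_nonneg_of_le_pi haq.le hap_pi.le haq3
  have hy1 : 1/2 ≤ y := by linarith
  have hy2 : y < 1 := by
    have := Real.cos_lt_cos_of_nonneg_of_le_pi (le_refl 0) haq_pi.le haq
    rwa [Real.cos_zero] at this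
  have hz1 : 7/10 ≤ z := by
    have h1 := Real.cos_le_cos_of_nonneg_of_le_pi har.le (by linarith) har4
    rw [Real.cos_pi_div_four] at h1
    nlinarith [Real.sq_sqrt (show (0:ℝ) ≤ 2 by norm_num), Real.sqrt_nonneg 2]
  have hz2 : z < 1 := by
    have := Real.cos_lt_cos_of_nonneg_of_le_pi (le_refl 0) har_pi.le har
    rwa [Real.cos_zero] at this
  have hsp : 0 < sp := Real.sin_pos_of_pos_of_lt_pi hap hap_pi
  have hsq : 0 < sq := Real.sin_pos_of_pos_of_lt_pi haq haq_pi
  have hsr : 0 < sr := Real.sin_pos_of_pos_of_lt_pi har har_pi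
  have hsp2 : sp^2 = 1 - x^2 := by
    have := Real.sin_sq_add_cos_sq (π / (p:ℝ)); linarith
  have hsq2 : sq^2 = 1 - y^2 := by
    have := Real.sin_sq_add_cos_sq (π / (q:ℝ)); linarith
  have hsr2 : sr^2 = 1 - z^2 := by
    have := Real.sin_sq_add_cos_sq (π / (r:ℝ)); linarith
  -- cosh a > 1, cosh b > 1
  have hA1 : 1 < Real.cosh a := by
    rw [hcosha, lt_div_iff₀ (mul_pos hsq hsr)]
    have hm : (sq*sr)^2 = (1-y^2)*(1-z^2) := by rw [mul_pow, hsq2, hsr2]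
    nlinarith [mul_pos hsq hsr, mul_nonneg (show (0:ℝ) ≤ y - 1/2 by linarith)
      (show (0:ℝ) ≤ z - 7/10 by linarith)]
  have hB1 : 1 < Real.cosh b := by
    rw [hcoshb, lt_div_iff₀ (mul_pos hsp hsr)]
    have hm : (sp*sr)^2 = (1-x^2)*(1-z^2) := by rw [mul_pow, hsp2, hsr2]
    nlinarith [mul_pos hsp hsr, mul_nonneg (show (0:ℝ) ≤ x - 1/2 by linarith)
      (show (0:ℝ) ≤ z - 7/10 by linarith)]
  have hsa2 : Real.sinh a ^ 2 = Real.cosh a ^ 2 - 1 := Real.sinh_sq a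
  have hsb2 : Real.sinh b ^ 2 = Real.cosh b ^ 2 - 1 := Real.sinh_sq b
  have hsa : 0 < Real.sinh a := by
    refine Real.sinh_pos_iff.2 (ha.lt_of_ne fun h => ?_)
    rw [← h, Real.cosh_zero] at hA1; exact lt_irrefl 1 hA1
  have hsb : 0 < Real.sinh b := by
    refine Real.sinh_pos_iff.2 (hb.lt_of_ne fun h => ?_)
    rw [← h, Real.cosh_zero] at hB1; exact lt_irrefl 1 hB1
  have hca : 0 < Real.cosh a := Real.cosh_pos a
  have hcb : 0 < Real.cosh b := Real.cosh_pos b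
  have hcosα : Real.cos (π - 2 * π / (r:ℝ)) = 1 - 2*z^2 := by
    have h2 : 2 * π / (r:ℝ) = 2 * (π / (r:ℝ)) := by ring
    rw [h2, Real.cos_pi_sub, Real.cos_two_mul]; ring
  -- T in closed form
  have hT : (1-2*z^2) * Real.cosh b + 2*z^2 * Real.cosh b'
      = (y*(1-2*z^2) + x*z*(1+2*z)) / (sp*sr) := by
    rw [hcoshb, hcoshb']
    field_simp
    ring
  have hA2 : Real.cosh a ^ 2 = (x + y*z)^2 / ((1-y^2)*(1-z^2)) := by
    rw [hcosha, div_pow, mul_pow, hsq2, hsr2]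
  have hB2 : Real.cosh b ^ 2 = (y + x*z)^2 / ((1-x^2)*(1-z^2)) := by
    rw [hcoshb, div_pow, mul_pow, hsp2, hsr2]
  have hT2 : ((1-2*z^2) * Real.cosh b + 2*z^2 * Real.cosh b')^2
      = (y*(1-2*z^2) + x*z*(1+2*z))^2 / ((1-x^2)*(1-z^2)) := by
    rw [hT, div_pow, mul_pow, hsp2, hsr2]
  have hdx : (0:ℝ) < 1 - x^2 := by
    have h := mul_pos (show (0:ℝ) < 1-x by linarith) (show (0:ℝ) < 1+x by linarith)
    calc (0:ℝ) < (1-x)*(1+x) := h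
      _ = 1 - x^2 := by ring
  have hdy : (0:ℝ) < 1 - y^2 := by
    have h := mul_pos (show (0:ℝ) < 1-y by linarith) (show (0:ℝ) < 1+y by linarith)
    calc (0:ℝ) < (1-y)*(1+y) := h
      _ = 1 - y^2 := by ring
  have hdz : (0:ℝ) < 1 - z^2 := by
    have h := mul_pos (show (0:ℝ) < 1-z by linarith) (show (0:ℝ) < 1+z by linarith)
    calc (0:ℝ) < (1-z)*(1+z) := h
      _ = 1 - z^2 := by ring
  have hden : (0:ℝ) < (1-x^2)*(1-y^2)*(1-z^2)^2 := by positivity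
  have hE : 0 < (y - x) *
      (y - 6*y*z^2 + 9*y*z^4 - 4*y*z^6 - y^3 + 5*y^3*z^2 - 4*y^3*z^4
      + x - 2*x*z^2 - 4*x*z^3 - 3*x*z^4 + 4*x*z^5 + 4*x*z^6
      - x*y^2 - 2*x*y^2*z + x*y^2*z^2 + 14*x*y^2*z^3 + 4*x*y^2*z^4 - 8*x*y^2*z^5
      - x^2*y - 2*x^2*y*z + 5*x^2*y*z^2 + 2*x^2*y*z^3 + 4*x^2*y*z^4 + 8*x^2*y*z^5
      - x^3 + x^3*z^2 + 4*x^3*z^3 + 4*x^3*z^4) :=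
    mul_pos (by linarith) (Q1_pos_aux x y z hx1 hy1 hy2.le hz1 hz2.le)
  have hX : (Real.cosh b ^ 2 - 1) * Real.cosh a ^ 2
      - (Real.cosh a ^ 2 - 1) * ((1-2*z^2) * Real.cosh b + 2*z^2 * Real.cosh b')^2
      = ((y - x) *
      (y - 6*y*z^2 + 9*y*z^4 - 4*y*z^6 - y^3 + 5*y^3*z^2 - 4*y^3*z^4
      + x - 2*x*z^2 - 4*x*z^3 - 3*x*z^4 + 4*x*z^5 + 4*x*z^6
      - x*y^2 - 2*x*y^2*z + x*y^2*z^2 + 14*x*y^2*z^3 + 4*x*y^2*z^4 - 8*x*y^2*z^5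
      - x^2*y - 2*x^2*y*z + 5*x^2*y*z^2 + 2*x^2*y*z^3 + 4*x^2*y*z^4 + 8*x^2*y*z^5
      - x^3 + x^3*z^2 + 4*x^3*z^3 + 4*x^3*z^4)) / ((1-x^2)*(1-y^2)*(1-z^2)^2) := by
    rw [hA2, hB2, hT2]
    field_simp
    ring
  have hXpos : 0 < (Real.cosh b ^ 2 - 1) * Real.cosh a ^ 2
      - (Real.cosh a ^ 2 - 1) * ((1-2*z^2) * Real.cosh b + 2*z^2 * Real.cosh b')^2 := by
    rw [hX]; exact div_pos hE hden
  have hu2 : (Real.sinh b * Real.cosh a)^2 = (Real.cosh b ^ 2 - 1) * Real.cosh a ^ 2 := by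
    rw [mul_pow, hsb2]
  have hv2 : (Real.sinh a * ((1-2*z^2) * Real.cosh b + 2*z^2 * Real.cosh b'))^2
      = (Real.cosh a ^ 2 - 1) * ((1-2*z^2) * Real.cosh b + 2*z^2 * Real.cosh b')^2 := by
    rw [mul_pow, hsa2]
  have hSBA : 0 < Real.sinh b * Real.cosh a := mul_pos hsb hca
  have hdiff : (Real.sinh a * ((1-2*z^2) * Real.cosh b + 2*z^2 * Real.cosh b'))^2
      < (Real.sinh b * Real.cosh a)^2 := by
    rw [hv2, hu2]; linarith [hXpos]
  have key : Real.sinh a * ((1-2*z^2) * Real.cosh b + 2*z^2 * Real.cosh b')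
      < Real.sinh b * Real.cosh a :=
    lt_of_pow_lt_pow_left₀ 2 hSBA.le hdiff
  have h5 : (1-2*z^2) * Real.cosh b + 2*z^2 * Real.cosh b'
      < Real.sinh b * Real.cosh a / Real.sinh a := by
    rw [lt_div_iff₀ hsa, mul_comm]; exact key
  have expand : Real.cosh b * (Real.sinh b / Real.cosh b / (Real.sinh a / Real.cosh a) - (1 - 2*z^2))
      = Real.sinh b * Real.cosh a / Real.sinh a - (1 - 2*z^2) * Real.cosh b := by
    field_simp
  rw [hcosα, Real.tanh_eq_sinh_div_cosh, Real.tanh_eq_sinh_div_cosh, expand,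
    show (1 - (1 - 2*z^2)) * Real.cosh b' = 2*z^2 * Real.cosh b' from by ring]
  clear hX hXpos hdiff hu2 hv2 hT2 hA2 hB2 hT hE expand key hcosha hcoshb hcoshb'
  linarith [h5]
end

section
/- Let p, r be integers with p ≥ 3 and r ≥ 5. Then tan(π/p)² · (1 − cos(π/r)) < cos(π/r). Equivalently, if φ ∈ (0, π/2) is the real number with cot φ = cot(π/p)·cos(π/r)/(1 − cos(π/r)), then φ + π/p < π/2. -/
open Real

theorem mu_angle_acute
    (p r : ℤ) (hp : 3 ≤ p) (hr : 5 ≤ r) :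
    Real.tan (π / (p : ℝ)) ^ 2 * (1 - Real.cos (π / (r : ℝ))) < Real.cos (π / (r : ℝ)) ∧
      ∀ φ : ℝ, φ ∈ Set.Ioo 0 (π / 2) →
        Real.cot φ =
          Real.cot (π / (p : ℝ)) * Real.cos (π / (r : ℝ)) / (1 - Real.cos (π / (r : ℝ))) →
        φ + π / (p : ℝ) < π / 2 := by
  have hp' : (3:ℝ) ≤ (p:ℝ) := by exact_mod_cast hp
  have hr' : (5:ℝ) ≤ (r:ℝ) := by exact_mod_cast hr
  have hpi := Real.pi_pos
  set a := π / (p:ℝ) with ha_def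
  set b := π / (r:ℝ) with hb_def
  have hp0 : (0:ℝ) < (p:ℝ) := by linarith
  have hr0 : (0:ℝ) < (r:ℝ) := by linarith
  have ha0 : 0 < a := div_pos hpi hp0
  have hb0 : 0 < b := div_pos hpi hr0
  have ha3 : a ≤ π / 3 := by
    rw [ha_def, div_le_div_iff₀ hp0 (by norm_num)]
    nlinarith
  have hb5 : b ≤ π / 5 := by
    rw [hb_def, div_le_div_iff₀ hr0 (by norm_num)]
    nlinarith
  have haπ2 : a < π / 2 := lt_of_le_of_lt ha3 (by linarith)
  -- cos a ≥ 1/2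
  have hcosa : (1:ℝ)/2 ≤ Real.cos a := by
    have h := Real.cos_le_cos_of_nonneg_of_le_pi ha0.le (by linarith : π/3 ≤ π) ha3
    rwa [Real.cos_pi_div_three] at h
  have hcosa0 : 0 < Real.cos a := by linarith
  have hsina0 : 0 < Real.sin a := Real.sin_pos_of_pos_of_lt_pi ha0 (by linarith)
  -- cos b > 3/4
  have hsqrt5 : (2:ℝ) < Real.sqrt 5 := by
    nlinarith [Real.sq_sqrt (by norm_num : (5:ℝ) ≥ 0), Real.sqrt_nonneg 5]
  have hcosb : (3:ℝ)/4 < Real.cos b := by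
    have h := Real.cos_le_cos_of_nonneg_of_le_pi hb0.le (by linarith : π/5 ≤ π) hb5
    rw [Real.cos_pi_div_five] at h
    linarith
  have hcosb1 : Real.cos b < 1 := by
    have h := Real.cos_lt_cos_of_nonneg_of_le_pi le_rfl (by linarith : b ≤ π) hb0
    simpa using h
  -- tan a ^ 2 ≤ 3
  have hsin2 : Real.sin a ^ 2 = 1 - Real.cos a ^ 2 := Real.sin_sq a
  have htan2 : Real.tan a ^ 2 ≤ 3 := by
    rw [Real.tan_eq_sin_div_cos, div_pow, div_le_iff₀ (by positivity)]
    nlinarith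
  have key : Real.tan a ^ 2 * (1 - Real.cos b) < Real.cos b := by
    nlinarith [sq_nonneg (Real.tan a)]
  refine ⟨key, ?_⟩
  intro φ hφ hcot
  have hsinφ : 0 < Real.sin φ := Real.sin_pos_of_pos_of_lt_pi hφ.1 (by linarith [hφ.2])
  have hcosφ : 0 < Real.cos φ := Real.cos_pos_of_mem_Ioo ⟨by linarith [hφ.1], hφ.2⟩
  -- from the cot equation: cos φ * sin a * (1 - cos b) = sin φ * cos a * cos b
  have hrel : Real.cos φ * Real.sin a * (1 - Real.cos b) =
      Real.sin φ * Real.cos a * Real.cos b := by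
    have h1c : (0:ℝ) < 1 - Real.cos b := by linarith
    have h := hcot
    rw [Real.cot_eq_cos_div_sin, Real.cot_eq_cos_div_sin] at h
    field_simp [hsinφ.ne', hsina0.ne', h1c.ne'] at h
    linear_combination h
  -- sin a ^2 (1 - cos b) < cos a ^2 cos b
  have h2 : Real.sin a ^ 2 * (1 - Real.cos b) < Real.cos a ^ 2 * Real.cos b := by
    have := key
    rw [Real.tan_eq_sin_div_cos, div_pow] at this
    have h3 : Real.sin a ^ 2 / Real.cos a ^ 2 * (1 - Real.cos b) * Real.cos a ^ 2
        < Real.cos b * Real.cos a ^ 2 := by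
      exact mul_lt_mul_of_pos_right this (by positivity)
    calc Real.sin a ^ 2 * (1 - Real.cos b)
        = Real.sin a ^ 2 / Real.cos a ^ 2 * (1 - Real.cos b) * Real.cos a ^ 2 := by
          field_simp
      _ < Real.cos b * Real.cos a ^ 2 := h3
      _ = Real.cos a ^ 2 * Real.cos b := by ring
  -- hence sin φ * sin a < cos φ * cos a
  have h4 : Real.sin φ * Real.sin a < Real.cos φ * Real.cos a := by
    have hcb : 0 < Real.cos b := by linarith
    have : Real.sin φ * Real.sin a * (Real.cos a * Real.cos b)
        < Real.cos φ * Real.cos a * (Real.cos a * Real.cos b) := by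
      nlinarith [mul_lt_mul_of_pos_left h2 hcosφ]
    exact lt_of_mul_lt_mul_right this (by positivity)
  -- conclude via tan monotonicity
  have htanφ : Real.tan φ < Real.tan (π / 2 - a) := by
    rw [Real.tan_pi_div_two_sub, Real.tan_eq_sin_div_cos]
    rw [div_lt_iff₀ hcosφ, Real.tan_eq_sin_div_cos, inv_div, div_mul_eq_mul_div,
      lt_div_iff₀ hsina0]
    exact lt_of_lt_of_eq h4 (mul_comm _ _)
  have hmem1 : φ ∈ Set.Ioo (-(π/2)) (π/2) := ⟨by linarith [hφ.1], hφ.2⟩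
  have hmem2 : π/2 - a ∈ Set.Ioo (-(π/2)) (π/2) := ⟨by linarith, by linarith⟩
  have := (Real.strictMonoOn_tan.lt_iff_lt hmem1 hmem2).mp htanφ
  linarith
end

section
/- Let q, r be integers with q ≥ 3 and r ≥ 4. Then tan(π/3)·(cos(π/r) + cos(π/3)·cos(π/q))/(sin(π/3)·sin(π/q)) > tan(π/q). Equivalently, if μ ∈ (0, π/2) satisfies cot μ = tan(π/3)·(cos(π/r) + cos(π/3)·cos(π/q))/(sin(π/3)·sin(π/q)), then μ + π/q < π/2. -/
open Real

theorem mu_angle_acute_p_eq_three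
    (q r : ℤ) (hq : 3 ≤ q) (hr : 4 ≤ r) :
    Real.tan (π / 3) *
        (Real.cos (π / (r : ℝ)) + Real.cos (π / 3) * Real.cos (π / (q : ℝ))) /
        (Real.sin (π / 3) * Real.sin (π / (q : ℝ))) > Real.tan (π / (q : ℝ)) ∧
      ∀ μ : ℝ, μ ∈ Set.Ioo 0 (π / 2) →
        Real.cot μ =
          Real.tan (π / 3) *
            (Real.cos (π / (r : ℝ)) + Real.cos (π / 3) * Real.cos (π / (q : ℝ))) /
            (Real.sin (π / 3) * Real.sin (π / (q : ℝ))) →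
        μ + π / (q : ℝ) < π / 2 := by
  have hπ := Real.pi_pos
  have hqr : (3:ℝ) ≤ (q:ℝ) := by exact_mod_cast hq
  have hrr : (4:ℝ) ≤ (r:ℝ) := by exact_mod_cast hr
  have hq0 : (0:ℝ) < (q:ℝ) := by linarith
  have hr0 : (0:ℝ) < (r:ℝ) := by linarith
  have hq1 : 0 < π / (q:ℝ) := by positivity
  have hr1 : 0 < π / (r:ℝ) := by positivity
  have hq2 : π / (q:ℝ) ≤ π / 3 := by
    apply div_le_div_of_nonneg_left hπ.le (by norm_num) hqr
  have hr2 : π / (r:ℝ) ≤ π / 4 := by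
    apply div_le_div_of_nonneg_left hπ.le (by norm_num) hrr
  have hq3 : π / (q:ℝ) < π / 2 := lt_of_le_of_lt hq2 (by linarith)
  have hc : 1/2 ≤ Real.cos (π/(q:ℝ)) := by
    rw [show (1:ℝ)/2 = Real.cos (π/3) by rw [Real.cos_pi_div_three]]
    exact Real.cos_le_cos_of_nonneg_of_le_pi hq1.le (by linarith) hq2
  have hd : Real.sqrt 2 / 2 ≤ Real.cos (π/(r:ℝ)) := by
    rw [show Real.sqrt 2 / 2 = Real.cos (π/4) by rw [Real.cos_pi_div_four]]
    exact Real.cos_le_cos_of_nonneg_of_le_pi hr1.le (by linarith) hr2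
  have hs : 0 < Real.sin (π/(q:ℝ)) :=
    Real.sin_pos_of_pos_of_lt_pi hq1 (by linarith)
  have hcpos : 0 < Real.cos (π/(q:ℝ)) := by linarith
  have h2 : (1:ℝ) < Real.sqrt 2 := by
    nlinarith [Real.sq_sqrt (by norm_num : (2:ℝ) ≥ 0), Real.sqrt_nonneg 2]
  have hkey : Real.tan (π / 3) *
        (Real.cos (π / (r : ℝ)) + Real.cos (π / 3) * Real.cos (π / (q : ℝ))) /
        (Real.sin (π / 3) * Real.sin (π / (q : ℝ))) > Real.tan (π / (q : ℝ)) := by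
    rw [Real.tan_eq_sin_div_cos (π/3), Real.tan_eq_sin_div_cos (π/(q:ℝ)),
      Real.sin_pi_div_three, Real.cos_pi_div_three]
    rw [gt_iff_lt, div_lt_div_iff₀ hcpos (by positivity)]
    have h3 : (0:ℝ) < Real.sqrt 3 := by positivity
    have hpyth := Real.sin_sq_add_cos_sq (π/(q:ℝ))
    have e : Real.sqrt 3 / 2 / (1/2) = Real.sqrt 3 := by ring
    rw [e]
    nlinarith [mul_le_mul hd hc (by norm_num : (0:ℝ) ≤ 1/2) (by nlinarith [Real.sqrt_nonneg 2]),
      sq_nonneg (Real.cos (π/(q:ℝ)) - 1/2), mul_pos hs hcpos]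
  refine ⟨hkey, ?_⟩
  intro μ hμ hcot
  have hμ1 : 0 < μ := hμ.1
  have hμ2 : μ < π/2 := hμ.2
  have hcot' : Real.cot μ = Real.tan (π/2 - μ) := by
    rw [Real.tan_pi_div_two_sub, Real.cot_eq_cos_div_sin, Real.tan_eq_sin_div_cos,
      inv_div]
  have htan : Real.tan (π/(q:ℝ)) < Real.tan (π/2 - μ) := by
    rw [← hcot', hcot]; exact hkey
  have := (Real.strictMonoOn_tan.lt_iff_lt
    (Set.mem_Ioo.2 ⟨by linarith, hq3⟩)
    (Set.mem_Ioo.2 ⟨by linarith, by linarith⟩)).1 htan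
  linarith
end
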